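/- arXiv:2012.10721 — 5 statements merged into one kernel-verified Lean document; each statement's English description precedes it below -/
import Mathlib

section
/- For every A > 0 there exists a constant C' > 0 such that for all t ∈ ℝ with −A ≤ t ≤ A and all z ∈ ℂ with Re(z) > 0, one has Im(R(t,z)) ≥ Im(z) − C', where R(t,z) := (t² + z²)^{1/2}. -/
open Complex

/-- The principal square root `R(t,z) := (t² + z²)^{1/2}`. -/
noncomputable def Rtz (t : ℝ) (z : ℂ) : ℂ := ((t : ℂ) ^ 2 + z ^ 2) ^ ((1 : ℂ) / 2)

/-!
Write `R = R(t,z)`. Both `R` and `z` lie in the closed right half-plane and `Im R`, `Im z` have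
the same sign, so `‖R - z‖ ≤ ‖R + z‖`. Hence `‖R - z‖² ≤ ‖R - z‖ ‖R + z‖ = ‖R² - z²‖ = t²`,
and `Im R ≥ Im z - |t| ≥ Im z - A`.
-/

namespace Complex

lemma norm_sub_le_norm_add_of_mul_nonneg {u v : ℂ} (hre : 0 ≤ u.re * v.re)
    (him : 0 ≤ u.im * v.im) : ‖u - v‖ ≤ ‖u + v‖ := by
  rw [← sq_le_sq₀ (norm_nonneg _) (norm_nonneg _), ← normSq_eq_norm_sq, ← normSq_eq_norm_sq,
    normSq_apply, normSq_apply]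
  simp only [sub_re, sub_im, add_re, add_im]
  nlinarith

lemma norm_sub_sq_le_norm_sq_sub_sq {u v : ℂ} (hre : 0 ≤ u.re * v.re)
    (him : 0 ≤ u.im * v.im) : ‖u - v‖ ^ 2 ≤ ‖u ^ 2 - v ^ 2‖ :=
  calc ‖u - v‖ ^ 2 = ‖u - v‖ * ‖u - v‖ := sq _
    _ ≤ ‖u - v‖ * ‖u + v‖ :=
      mul_le_mul_of_nonneg_left (norm_sub_le_norm_add_of_mul_nonneg hre him) (norm_nonneg _)
    _ = ‖u ^ 2 - v ^ 2‖ := by rw [← norm_mul, sq_sub_sq, mul_comm]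

lemma cpow_inv_two_re_nonneg (w : ℂ) : 0 ≤ (w ^ (2⁻¹ : ℂ)).re := by
  rw [cpow_inv_two_re]
  exact Real.sqrt_nonneg _

lemma cpow_inv_two_im_mul_im_nonneg (w : ℂ) : 0 ≤ (w ^ (2⁻¹ : ℂ)).im * w.im := by
  rcases le_or_gt 0 w.im with hw | hw
  · rw [cpow_inv_two_im_eq_sqrt hw]
    exact mul_nonneg (Real.sqrt_nonneg _) hw
  · rw [cpow_inv_two_im_eq_neg_sqrt hw]
    exact mul_nonneg_of_nonpos_of_nonpos (neg_nonpos.2 (Real.sqrt_nonneg _)) hw.le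

end Complex

lemma Rtz_eq_cpow_inv_two (t : ℝ) (z : ℂ) : Rtz t z = ((t : ℂ) ^ 2 + z ^ 2) ^ (2⁻¹ : ℂ) := by
  rw [Rtz, one_div]

lemma Rtz_sq (t : ℝ) (z : ℂ) : Rtz t z ^ 2 = (t : ℂ) ^ 2 + z ^ 2 := by
  rw [Rtz_eq_cpow_inv_two, cpow_ofNat_inv_pow]

lemma Rtz_im_mul_im_nonneg (t : ℝ) {z : ℂ} (hz : 0 < z.re) : 0 ≤ (Rtz t z).im * z.im := by
  have h := cpow_inv_two_im_mul_im_nonneg ((t : ℂ) ^ 2 + z ^ 2)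
  rw [← Rtz_eq_cpow_inv_two] at h
  have him : ((t : ℂ) ^ 2 + z ^ 2).im = 2 * z.re * z.im := by
    simp only [add_im, sq, mul_im, ofReal_re, ofReal_im]
    ring
  rw [him] at h
  nlinarith

lemma norm_Rtz_sub_le (t : ℝ) {z : ℂ} (hz : 0 < z.re) : ‖Rtz t z - z‖ ≤ |t| := by
  have hre : 0 ≤ (Rtz t z).re * z.re :=
    mul_nonneg (Rtz_eq_cpow_inv_two t z ▸ cpow_inv_two_re_nonneg _) hz.le
  have h := norm_sub_sq_le_norm_sq_sub_sq hre (Rtz_im_mul_im_nonneg t hz)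
  rw [Rtz_sq, add_sub_cancel_right, norm_pow, norm_real, Real.norm_eq_abs] at h
  exact (sq_le_sq₀ (norm_nonneg _) (abs_nonneg t)).1 h

/-- For every `A > 0` there exists `C' > 0` such that, for all `t ∈ [−A, A]` and
all `z ∈ ℂ` with `Re z > 0`, one has `Im(R(t,z)) ≥ Im(z) − C'`. -/
theorem stmt_2 (A : ℝ) (hA : 0 < A) :
    ∃ C' > (0 : ℝ), ∀ (t : ℝ), -A ≤ t → t ≤ A → ∀ (z : ℂ), 0 < z.re →
      z.im - C' ≤ (Rtz t z).im := by
  refine ⟨A, hA, fun t ht₁ ht₂ z hz => ?_⟩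
  have hR : |(Rtz t z).im - z.im| ≤ |t| := by
    rw [← sub_im]
    exact (abs_im_le_norm _).trans (norm_Rtz_sub_le t hz)
  have ht : |t| ≤ A := abs_le.2 ⟨ht₁, ht₂⟩
  linarith [neg_abs_le ((Rtz t z).im - z.im)]
end

section
/- For every ξ ∈ ℝ, one has ∫_ℝ e^{−iξt} · e^{t/2}/(π(e^{2t} + 1)) dt = sinh(π(ξ − i/2)/2) / sinh(π(ξ − i/2)); that is, the Fourier transform (with convention κ̂(ξ) = (1/√(2π)) ∫_ℝ κ(t) e^{−iξt} dt) of the function κ(t) := e^{t/2}/(π(e^{2t} + 1)) equals κ̂(ξ) = (1/√(2π)) · sinh(π(ξ − i/2)/2)/sinh(π(ξ − i/2)). -/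
/-!
The substitution `x = σ(s) = 1 / (1 + e^{-s})` turns the Beta integral `B(a, b)` into
`∫_ℝ e^{a s} / (1 + e^s)^{a + b} ds`, so for `b = 1 - a` Euler's reflection formula gives
`∫_ℝ e^{a s} / (1 + e^s) ds = π / sin (π a)` when `0 < Re a < 1`. After `s = 2t` the Fourier
integral is `1 / (2π)` times this with `a = 1/4 - iξ/2`, and `sin (π a) = cosh w` for
`w = π (ξ - i/2) / 2`; hence its value `1 / (2 cosh w)` equals `sinh w / sinh (2w)`.
-/

open Complex Real MeasureTheory Set

lemma ofReal_exp_cpow (x : ℝ) (w : ℂ) : (Real.exp x : ℂ) ^ w = cexp (x * w) := by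
  rw [cpow_def_of_ne_zero (by exact_mod_cast (Real.exp_pos x).ne'),
    ← ofReal_log (Real.exp_pos x).le, Real.log_exp]

lemma abs_deriv_sigmoid_smul_beta_integrand (a b : ℂ) (s : ℝ) :
    |sigmoid s * (1 - sigmoid s)| •
        ((sigmoid s : ℂ) ^ (a - 1) * (1 - (sigmoid s : ℂ)) ^ (b - 1)) =
      cexp (a * s) / (1 + Real.exp s : ℂ) ^ (a + b) := by
  set L := Real.log (1 + Real.exp s)
  have hL : Real.exp L = 1 + Real.exp s := Real.exp_log (by positivity)
  have hσ : sigmoid s = Real.exp (s - L) := by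
    rw [Real.exp_sub, hL, sigmoid_def, Real.exp_neg]
    field_simp
    ring
  have h1σ : 1 - sigmoid s = Real.exp (-L) := by
    rw [Real.exp_neg, hL, sigmoid_def, Real.exp_neg]
    field_simp
    ring
  rw [abs_of_pos (mul_pos (sigmoid_pos s) (sub_pos.2 (sigmoid_lt_one s))),
    show (1 : ℂ) - sigmoid s = ((1 - sigmoid s : ℝ) : ℂ) by push_cast; ring, h1σ, hσ,
    show (1 + Real.exp s : ℂ) = (Real.exp L : ℂ) by rw [hL]; push_cast; ring]
  rw [ofReal_exp_cpow, ofReal_exp_cpow, ofReal_exp_cpow, real_smul, ← Real.exp_add, ofReal_exp,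
    ← Complex.exp_add, ← Complex.exp_add, ← Complex.exp_sub]
  congr 1
  push_cast
  ring

-- Valid for all `a, b`: the one-dimensional change of variables formula needs no integrability.
theorem betaIntegral_eq_integral_exp (a b : ℂ) :
    betaIntegral a b = ∫ s : ℝ, cexp (a * s) / (1 + Real.exp s : ℂ) ^ (a + b) := by
  rw [betaIntegral, intervalIntegral.integral_of_le zero_le_one, integral_Ioc_eq_integral_Ioo,
    ← range_sigmoid, ← image_univ, integral_image_eq_integral_abs_deriv_smul MeasurableSet.univ
      (fun s _ => (hasDerivAt_sigmoid s).hasDerivWithinAt) sigmoid_injective.injOn,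
    Measure.restrict_univ]
  simp_rw [abs_deriv_sigmoid_smul_beta_integrand]

theorem integral_exp_mul_div_one_add_exp {a : ℂ} (h0 : 0 < a.re) (h1 : a.re < 1) :
    ∫ s : ℝ, cexp (a * s) / (1 + Real.exp s) = π / Complex.sin (π * a) := by
  have hB := betaIntegral_eq_integral_exp a (1 - a)
  simp only [add_sub_cancel, Complex.cpow_one] at hB
  rw [← hB, ← Complex.Gamma_mul_Gamma_one_sub,
    Complex.Gamma_mul_Gamma_eq_betaIntegral h0 (by simpa using h1), add_sub_cancel,
    Complex.Gamma_one, one_mul]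

lemma Complex.sinh_ne_zero_of_im_mem_Ioo {z : ℂ} (hz : z.im ∈ Ioo (-π) 0) : sinh z ≠ 0 := by
  intro h
  obtain ⟨k, hk⟩ := Complex.sin_eq_zero_iff.1 (by rw [sin_mul_I, h, zero_mul] : sin (z * I) = 0)
  have him : z.im = -(k * π) := by linarith [show -z.im = k * π by simpa using congrArg re hk]
  rw [him] at hz
  have hk0 : (0 : ℝ) < k := by nlinarith [hz.2, pi_pos]
  have hk1 : (k : ℝ) < 1 := by nlinarith [hz.1, pi_pos]
  norm_cast at hk0 hk1
  omega

/-- For every `ξ ∈ ℝ`,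
`∫_ℝ e^{−iξt} · e^{t/2}/(π(e^{2t} + 1)) dt = sinh(π(ξ − i/2)/2) / sinh(π(ξ − i/2))`;
i.e. the Fourier transform of `κ(t) = e^{t/2}/(π(e^{2t}+1))` (with the convention
`κ̂(ξ) = (1/√(2π)) ∫ κ(t) e^{−iξt} dt`) equals
`(1/√(2π)) sinh(π(ξ − i/2)/2)/sinh(π(ξ − i/2))`. -/
theorem stmt_13 (ξ : ℝ) :
    ∫ t : ℝ, Complex.exp (-(Complex.I * (ξ : ℂ) * (t : ℂ))) *
        (((Real.exp (t / 2) / (Real.pi * (Real.exp (2 * t) + 1))) : ℝ) : ℂ) =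
      Complex.sinh ((Real.pi : ℂ) * ((ξ : ℂ) - Complex.I / 2) / 2) /
        Complex.sinh ((Real.pi : ℂ) * ((ξ : ℂ) - Complex.I / 2)) := by
  set a : ℂ := 1 / 4 - ξ / 2 * I with ha
  set w : ℂ := π * (ξ - I / 2) / 2 with hw
  have hintegrand (t : ℝ) :
      cexp (-(I * ξ * t)) * ((Real.exp (t / 2) / (π * (Real.exp (2 * t) + 1)) : ℝ) : ℂ) =
        (π : ℂ)⁻¹ * (cexp (a * ↑(2 * t)) / (1 + Real.exp (2 * t))) := by
    push_cast
    rw [show a * (2 * t) = -(I * ξ * t) + t / 2 by rw [ha]; ring, Complex.exp_add]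
    field_simp
    ring
  have hsin : Complex.sin (π * a) = cosh w := by
    rw [← cos_mul_I, ← Complex.sin_pi_div_two_sub]
    congr 1
    linear_combination (-(π : ℂ) / 4) * I_sq
  have hsinh : sinh w ≠ 0 :=
    Complex.sinh_ne_zero_of_im_mem_Ioo (by simp [hw]; constructor <;> linarith [pi_pos])
  simp_rw [hintegrand]
  rw [integral_const_mul,
    Measure.integral_comp_mul_left (fun s : ℝ => cexp (a * s) / (1 + Real.exp s)) 2,
    integral_exp_mul_div_one_add_exp (by simp [ha]) (by simp [ha]; norm_num), hsin,
    show (π : ℂ) * (ξ - I / 2) = 2 * w by rw [hw]; ring, Complex.sinh_two_mul,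
    abs_of_pos (by norm_num), Complex.real_smul]
  field_simp
  push_cast
  ring
end

section
/- For every ξ ∈ ℝ, one has |sinh(π(ξ − i/2)/2)| ≤ (1/√2) · |sinh(π(ξ − i/2))|, and equality holds if and only if ξ = 0 (at which point the left side equals sin(π/4) and the right side equals (1/√2)·sin(π/2) = 1/√2). -/
/-!
Writing `x = πξ`, the identity `|sinh(a + bi)|² = sinh² a + sin² b` gives
`|sinh(π(ξ − i/2))| = cosh x` and `|sinh(π(ξ − i/2)/2)| = √(cosh x / 2)`. The claim thus reduces
to `√c ≤ c` for `c = cosh x ≥ 1`, with equality exactly when `c = 1`, i.e. `ξ = 0`.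
-/

open Complex Real

theorem Complex.norm_sinh_add_mul_I (x y : ℝ) :
    ‖Complex.sinh (x + y * I)‖ = √(Real.sinh x ^ 2 + Real.sin y ^ 2) := by
  rw [Complex.sinh_add, Complex.sinh_mul_I, Complex.cosh_mul_I, ← ofReal_sinh, ← ofReal_cosh,
    ← ofReal_sin, ← ofReal_cos, ← ofReal_mul, ← mul_assoc, ← ofReal_mul, norm_add_mul_I]
  congr 1
  linear_combination Real.sin y ^ 2 * Real.cosh_sq x + Real.sinh x ^ 2 * Real.sin_sq_add_cos_sq y

theorem Real.cosh_eq_two_mul_sinh_half_sq_add_one (x : ℝ) :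
    Real.cosh x = 2 * Real.sinh (x / 2) ^ 2 + 1 := by
  have h := Real.cosh_two_mul (x / 2)
  rw [mul_div_cancel₀ x two_ne_zero] at h
  linear_combination h + Real.cosh_sq (x / 2)

theorem Real.sqrt_cosh_eq_cosh_iff {x : ℝ} : √(Real.cosh x) = Real.cosh x ↔ x = 0 := by
  have hle : √(Real.cosh x) ≤ Real.cosh x :=
    Real.sqrt_le_self_iff.2 (.inr (Real.one_le_cosh x))
  rw [← not_iff_not, ← Ne, ← hle.lt_iff_ne, Real.sqrt_lt_self_iff, Real.one_lt_cosh]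

lemma norm_sinh_pi_mul_sub_half_I (ξ : ℝ) :
    ‖Complex.sinh (π * (ξ - I / 2))‖ = Real.cosh (π * ξ) := by
  have h : (π : ℂ) * (ξ - I / 2) = ((π * ξ : ℝ) : ℂ) + ((-(π / 2) : ℝ) : ℂ) * I := by
    push_cast; ring
  rw [h, Complex.norm_sinh_add_mul_I, Real.sin_neg, Real.sin_pi_div_two, neg_one_sq,
    ← Real.cosh_sq, Real.sqrt_sq (Real.cosh_pos _).le]

lemma norm_sinh_pi_mul_sub_half_I_div_two (ξ : ℝ) :
    ‖Complex.sinh (π * (ξ - I / 2) / 2)‖ = √(Real.cosh (π * ξ)) / √2 := by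
  have h : (π : ℂ) * (ξ - I / 2) / 2 = ((π * ξ / 2 : ℝ) : ℂ) + ((-(π / 4) : ℝ) : ℂ) * I := by
    push_cast; ring
  have hsin : Real.sin (-(π / 4)) ^ 2 = 1 / 2 := by
    rw [Real.sin_neg, neg_sq, Real.sin_pi_div_four, div_pow, Real.sq_sqrt zero_le_two]; norm_num
  rw [h, Complex.norm_sinh_add_mul_I, hsin, ← Real.sqrt_div' _ zero_le_two,
    Real.cosh_eq_two_mul_sinh_half_sq_add_one (π * ξ)]
  congr 1
  ring

/-- For every `ξ ∈ ℝ`, `|sinh(π(ξ − i/2)/2)| ≤ (1/√2)|sinh(π(ξ − i/2))|`, with equality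
if and only if `ξ = 0`; at `ξ = 0` the left side equals `sin(π/4)` and the right side
equals `(1/√2)·sin(π/2) = 1/√2`. -/
theorem stmt_14 (ξ : ℝ) :
    norm (Complex.sinh ((Real.pi : ℂ) * ((ξ : ℂ) - Complex.I / 2) / 2)) ≤
      (1 / Real.sqrt 2) *
        norm (Complex.sinh ((Real.pi : ℂ) * ((ξ : ℂ) - Complex.I / 2))) ∧
    (norm (Complex.sinh ((Real.pi : ℂ) * ((ξ : ℂ) - Complex.I / 2) / 2)) =
        (1 / Real.sqrt 2) *
          norm (Complex.sinh ((Real.pi : ℂ) * ((ξ : ℂ) - Complex.I / 2))) ↔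
      ξ = 0) ∧
    norm (Complex.sinh ((Real.pi : ℂ) * ((0 : ℂ) - Complex.I / 2) / 2)) =
      Real.sin (Real.pi / 4) ∧
    (1 / Real.sqrt 2) *
        norm (Complex.sinh ((Real.pi : ℂ) * ((0 : ℂ) - Complex.I / 2))) =
      1 / Real.sqrt 2 := by
  have h₀ := norm_sinh_pi_mul_sub_half_I_div_two 0
  have h₁ := norm_sinh_pi_mul_sub_half_I 0
  simp only [ofReal_zero, mul_zero, Real.cosh_zero, Real.sqrt_one] at h₀ h₁
  rw [norm_sinh_pi_mul_sub_half_I_div_two, norm_sinh_pi_mul_sub_half_I, one_div_mul_eq_div,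
    h₀, h₁, Real.sin_pi_div_four, mul_one, div_left_inj' (Real.sqrt_pos.2 two_pos).ne',
    Real.sqrt_cosh_eq_cosh_iff, mul_eq_zero]
  refine ⟨?_, or_iff_right Real.pi_ne_zero, Real.sqrt_div_self'.symm, rfl⟩
  gcongr
  exact Real.sqrt_le_self_iff.2 (.inr (Real.one_le_cosh _))
end

section
/- Let 0 ≤ θ < π/2. Then for every t > 0 and every z ∈ ℂ with 0 ≤ Arg(z) ≤ θ (including z = 0), the principal square root R(t,z) := (t² + z²)^{1/2} satisfies 0 ≤ Arg(R(t,z)) ≤ π/2 (so that Im(R(t,z)) ≥ 0) and |R(t,z)| ≥ cos(θ) · t. -/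
open Complex Real

namespace Complex

theorem arg_cpow_ofReal {x : ℝ} (hx₀ : 0 ≤ x) (hx₁ : x ≤ 1) (w : ℂ) :
    arg (w ^ (x : ℂ)) = x * arg w := by
  rcases hx₀.eq_or_lt with rfl | hx
  · simp
  rcases eq_or_ne w 0 with rfl | hw
  · simp [zero_cpow (ofReal_ne_zero.mpr hx.ne')]
  have him : (log w * x).im = x * arg w := by simp [log_im, mul_comm]
  have hlo : -π < x * arg w := by nlinarith [neg_pi_lt_arg w, pi_pos]
  have hhi : x * arg w ≤ π := by nlinarith [arg_le_pi w, pi_pos, neg_pi_lt_arg w]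
  rw [cpow_def_of_ne_zero hw, ← log_im, log_exp (him ▸ hlo) (him ▸ hhi), him]

theorem im_sq_nonneg_of_arg_mem {z : ℂ} (h₀ : 0 ≤ arg z) (h₁ : arg z ≤ π / 2) :
    0 ≤ (z ^ 2).im := by
  have hre : 0 ≤ z.re := abs_arg_le_pi_div_two_iff.mp (by rw [abs_of_nonneg h₀]; linarith)
  have him : 0 ≤ z.im := arg_nonneg_iff.mp h₀
  rw [sq, mul_im]
  nlinarith

theorem exp_neg_mul_I_mul_sq (θ : ℝ) (z : ℂ) :
    exp (-θ * I) * z ^ 2 = (‖z‖ ^ 2 : ℝ) * exp ((2 * arg z - θ : ℝ) * I) := by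
  conv_lhs => rw [← norm_mul_exp_arg_mul_I z]
  rw [mul_pow, ← exp_nat_mul, mul_left_comm, ← exp_add]
  push_cast
  ring_nf

theorem re_exp_neg_mul_I_mul_sq_nonneg {θ : ℝ} {z : ℂ} (h₀ : 0 ≤ arg z) (h₁ : arg z ≤ θ)
    (hθ : θ ≤ π / 2) : 0 ≤ (exp (-θ * I) * z ^ 2).re := by
  rw [exp_neg_mul_I_mul_sq, re_ofReal_mul, exp_ofReal_mul_I_re]
  exact mul_nonneg (by positivity) (Real.cos_nonneg_of_mem_Icc ⟨by linarith, by linarith⟩)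

theorem cos_mul_sq_le_norm_ofReal_sq_add_sq {θ : ℝ} (t : ℝ) {z : ℂ} (h₀ : 0 ≤ arg z)
    (h₁ : arg z ≤ θ) (hθ : θ ≤ π / 2) : Real.cos θ * t ^ 2 ≤ ‖(t : ℂ) ^ 2 + z ^ 2‖ := by
  have hrot : (exp (-θ * I) * ((t : ℂ) ^ 2 + z ^ 2)).re
      = Real.cos θ * t ^ 2 + (exp (-θ * I) * z ^ 2).re := by
    rw [mul_add, add_re, mul_comm (exp _) ((t : ℂ) ^ 2), ← ofReal_pow, re_ofReal_mul,
      ← ofReal_neg, exp_ofReal_mul_I_re, Real.cos_neg, mul_comm]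
  calc Real.cos θ * t ^ 2
      ≤ (exp (-θ * I) * ((t : ℂ) ^ 2 + z ^ 2)).re := by
        rw [hrot]; linarith [re_exp_neg_mul_I_mul_sq_nonneg h₀ h₁ hθ]
    _ ≤ ‖exp (-θ * I) * ((t : ℂ) ^ 2 + z ^ 2)‖ := re_le_norm _
    _ = ‖(t : ℂ) ^ 2 + z ^ 2‖ := by rw [norm_mul, ← ofReal_neg, norm_exp_ofReal_mul_I, one_mul]

end Complex

theorem stmt_18_general (θ : ℝ) (hθ₁ : θ < π / 2) (t : ℝ)
    (z : ℂ) (hz₀ : 0 ≤ z.arg) (hz₁ : z.arg ≤ θ) :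
    0 ≤ (Rtz t z).arg ∧ (Rtz t z).arg ≤ π / 2 ∧ 0 ≤ (Rtz t z).im ∧
      Real.cos θ * t ≤ ‖Rtz t z‖ := by
  set w : ℂ := (t : ℂ) ^ 2 + z ^ 2
  have hRtz : Rtz t z = w ^ ((1 / 2 : ℝ) : ℂ) := by rw [Rtz]; push_cast; rfl
  have hw_arg : 0 ≤ w.arg := arg_nonneg_iff.mpr <| by
    simpa [w, ← ofReal_pow] using im_sq_nonneg_of_arg_mem hz₀ (hz₁.trans hθ₁.le)
  have harg : (Rtz t z).arg = w.arg / 2 := by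
    rw [hRtz, arg_cpow_ofReal (by norm_num) (by norm_num)]; ring
  have hcos₀ : 0 ≤ Real.cos θ := Real.cos_nonneg_of_mem_Icc ⟨by linarith, hθ₁.le⟩
  have hnorm : (Real.cos θ * t) ^ 2 ≤ ‖w‖ :=
    calc (Real.cos θ * t) ^ 2 = (Real.cos θ * Real.cos θ) * t ^ 2 := by ring
      _ ≤ Real.cos θ * t ^ 2 := by
          gcongr; exact mul_le_of_le_one_left hcos₀ (Real.cos_le_one θ)
      _ ≤ ‖w‖ := cos_mul_sq_le_norm_ofReal_sq_add_sq t hz₀ hz₁ hθ₁.le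
  refine ⟨by rw [harg]; positivity, by rw [harg]; linarith [arg_le_pi w],
    arg_nonneg_iff.mp (by rw [harg]; positivity), ?_⟩
  rw [hRtz, norm_cpow_real, ← Real.sqrt_eq_rpow]
  exact (le_abs_self _).trans (Real.abs_le_sqrt hnorm)

/-- Let `0 ≤ θ < π/2`. For every `t > 0` and `z ∈ ℂ` with `0 ≤ Arg z ≤ θ` (including
`z = 0`), one has `0 ≤ Arg(R(t,z)) ≤ π/2` (so `Im(R(t,z)) ≥ 0`) and
`|R(t,z)| ≥ cos θ · t`. -/
theorem stmt_18 (θ : ℝ) (hθ₀ : 0 ≤ θ) (hθ₁ : θ < π / 2) (t : ℝ) (ht : 0 < t)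
    (z : ℂ) (hz₀ : 0 ≤ z.arg) (hz₁ : z.arg ≤ θ) :
    0 ≤ (Rtz t z).arg ∧ (Rtz t z).arg ≤ π / 2 ∧ 0 ≤ (Rtz t z).im ∧
      Real.cos θ * t ≤ ‖Rtz t z‖ :=
  stmt_18_general θ hθ₁ t z hz₀ hz₁
end

section
/- Let a > 0, y₁ ∈ ℝ and y₂ ∈ [−a, a]. Then for every z ∈ ℂ with Re(z) > a, the complex number (y₁ − a)² + (y₂ − z)² does not lie in ℝ⁻ = (−∞, 0], and consequently the map z ↦ ((y₁ − a)² + (y₂ − z)²)^{1/2} is holomorphic on the half-plane {z ∈ ℂ : Re(z) > a}. -/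
open Complex

/-- `Im (w ^ 2) = 2 Re w Im w` vanishes only on the real axis when `Re w ≠ 0`, and there
`u ^ 2 + w ^ 2 = u ^ 2 + (Re w) ^ 2 > 0`. -/
theorem sq_add_sq_mem_slitPlane {u w : ℂ} (hu : u.im = 0) (hw : w.re ≠ 0) :
    u ^ 2 + w ^ 2 ∈ slitPlane := by
  rw [mem_slitPlane_iff]
  by_cases hwim : w.im = 0
  · left
    simp only [sq, add_re, mul_re, hu, hwim, mul_zero, sub_zero]
    have hu' : 0 ≤ u.re * u.re := mul_self_nonneg _
    have hw' : 0 < w.re * w.re := mul_self_pos.mpr hw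
    linarith
  · right
    have him : (u ^ 2 + w ^ 2).im = 2 * (w.re * w.im) := by
      simp only [sq, add_im, mul_im, hu, mul_zero, zero_mul, add_zero]
      ring
    rw [him]
    exact mul_ne_zero two_ne_zero (mul_ne_zero hw hwim)

theorem stmt_19_general (a y₁ y₂ : ℝ) (hy₂ : y₂ ∈ Set.Icc (-a) a) :
    (∀ z : ℂ, a < z.re →
      ¬((((y₁ : ℂ) - (a : ℂ)) ^ 2 + ((y₂ : ℂ) - z) ^ 2).im = 0 ∧
        (((y₁ : ℂ) - (a : ℂ)) ^ 2 + ((y₂ : ℂ) - z) ^ 2).re ≤ 0)) ∧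
    DifferentiableOn ℂ
      (fun z : ℂ => (((y₁ : ℂ) - (a : ℂ)) ^ 2 + ((y₂ : ℂ) - z) ^ 2) ^ ((1 : ℂ) / 2))
      {z : ℂ | a < z.re} := by
  have hslit : ∀ z : ℂ, a < z.re →
      ((y₁ : ℂ) - (a : ℂ)) ^ 2 + ((y₂ : ℂ) - z) ^ 2 ∈ slitPlane := fun z hz =>
    sq_add_sq_mem_slitPlane (by simp) (by simpa [sub_eq_zero] using (hy₂.2.trans_lt hz).ne)
  refine ⟨fun z hz ⟨him, hre⟩ => ?_, fun z hz => ?_⟩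
  · rcases mem_slitPlane_iff.mp (hslit z hz) with hpos | hne
    exacts [hre.not_gt hpos, hne him]
  · refine DifferentiableAt.differentiableWithinAt ?_
    exact .cpow (by fun_prop) (differentiableAt_const _) (hslit z hz)

/-- Let `a > 0`, `y₁ ∈ ℝ`, `y₂ ∈ [−a, a]`. Then for every `z ∈ ℂ` with `Re z > a` the
complex number `(y₁ − a)² + (y₂ − z)²` does not lie in `(−∞, 0]`, and consequently
`z ↦ ((y₁ − a)² + (y₂ − z)²)^{1/2}` is holomorphic on `{z : Re z > a}`. -/
theorem stmt_19 (a y₁ y₂ : ℝ) (ha : 0 < a) (hy₂ : y₂ ∈ Set.Icc (-a) a) :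
    (∀ z : ℂ, a < z.re →
      ¬((((y₁ : ℂ) - (a : ℂ)) ^ 2 + ((y₂ : ℂ) - z) ^ 2).im = 0 ∧
        (((y₁ : ℂ) - (a : ℂ)) ^ 2 + ((y₂ : ℂ) - z) ^ 2).re ≤ 0)) ∧
    DifferentiableOn ℂ
      (fun z : ℂ => (((y₁ : ℂ) - (a : ℂ)) ^ 2 + ((y₂ : ℂ) - z) ^ 2) ^ ((1 : ℂ) / 2))
      {z : ℂ | a < z.re} :=
  stmt_19_general a y₁ y₂ hy₂
end
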